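/- Let k ≥ 3 be an integer. For real numbers p_1, …, p_k ∈ [0,1] with p_1 + ⋯ + p_k = 1, define M(p) to be the maximum of all the numbers p_i² (over i ∈ {1,…,k}) and 2·p_i·p_j (over pairs i ≠ j in {1,…,k}). Then M(p) ≥ 2/k² for every such p, and the choice p_i = 1/k for all i gives M(p) = 2/k²; hence the minimum of M(p) over the probability simplex equals 2/k². -/

import Mathlib

/-!
Some coordinate `p i` is at least `1/k`. Summing the pair terms `2 p_i p_j ≤ M` over `j ≠ i`
gives `2 p_i (1 - p_i) ≤ (k - 1) M`, and `p_i² ≤ M`. With `t = k p_i ≥ 1`, either `t² ≥ 2`,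
or `t < √2 ≤ k - 1` and then `(t - 1)(k - 1 - t) ≥ 0` says `k² p_i (1 - p_i) ≥ k - 1`;
in both cases `M ≥ 2/k²`. The uniform vector attains the bound since there all pair terms
equal `2/k²` and dominate the square terms.
-/

/-- `M(p)`: the maximum of all `p i ^ 2` (for `i`) and `2 * p i * p j` (for `i ≠ j`),
encoded as a `Finset.sup'` over all ordered pairs `(i, j)`, where the diagonal entries
give `p i ^ 2` and the off-diagonal ones give `2 * p i * p j`. -/
noncomputable def simplexMax {k : ℕ} (hk : 0 < k) (p : Fin k → ℝ) : ℝ :=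
  have : Nonempty (Fin k) := Fin.pos_iff_nonempty.mp hk
  Finset.univ.sup' Finset.univ_nonempty
    (fun ij : Fin k × Fin k => if ij.1 = ij.2 then p ij.1 ^ 2 else 2 * p ij.1 * p ij.2)

lemma two_div_sq_le_of_sq_le_of_two_mul_mul_one_sub_le {k x M : ℝ} (hk : 3 ≤ k)
    (hx : 1 / k ≤ x) (hsq : x ^ 2 ≤ M) (hpair : 2 * x * (1 - x) ≤ (k - 1) * M) :
    2 / k ^ 2 ≤ M := by
  have hk0 : 0 < k := by linarith
  set t := k * x
  have ht1 : 1 ≤ t := by rwa [div_le_iff₀ hk0, mul_comm] at hx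
  rw [div_le_iff₀ (by positivity)]
  by_cases hbig : 2 ≤ t ^ 2
  · nlinarith [mul_pow k x 2]
  · have htk : t ≤ k - 1 := by nlinarith
    have hprod : k - 1 ≤ t * (k - t) := by
      nlinarith [mul_nonneg (sub_nonneg.2 ht1) (sub_nonneg.2 htk)]
    nlinarith

namespace simplexMax

variable {k : ℕ} (hk : 0 < k) (p : Fin k → ℝ)

lemma entry_le (ij : Fin k × Fin k) :
    (if ij.1 = ij.2 then p ij.1 ^ 2 else 2 * p ij.1 * p ij.2) ≤ simplexMax hk p := by
  unfold simplexMax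
  exact Finset.le_sup' (fun ij : Fin k × Fin k =>
    if ij.1 = ij.2 then p ij.1 ^ 2 else 2 * p ij.1 * p ij.2) (Finset.mem_univ ij)

lemma le_of_entry_le {c : ℝ}
    (h : ∀ ij : Fin k × Fin k, (if ij.1 = ij.2 then p ij.1 ^ 2 else 2 * p ij.1 * p ij.2) ≤ c) :
    simplexMax hk p ≤ c := by
  unfold simplexMax
  exact Finset.sup'_le _ _ fun ij _ => h ij

lemma sq_le (i : Fin k) : p i ^ 2 ≤ simplexMax hk p := by
  simpa using entry_le hk p (i, i)

lemma two_mul_mul_le {i j : Fin k} (hij : i ≠ j) : 2 * p i * p j ≤ simplexMax hk p := by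
  simpa [hij] using entry_le hk p (i, j)

lemma two_mul_mul_one_sub_le (hs : ∑ i, p i = 1) (i : Fin k) :
    2 * p i * (1 - p i) ≤ ((k : ℝ) - 1) * simplexMax hk p := by
  have hrest : ∑ j ∈ Finset.univ.erase i, p j = 1 - p i := by
    rw [← hs, ← Finset.add_sum_erase _ _ (Finset.mem_univ i), add_sub_cancel_left]
  have hcard : ((Finset.univ.erase i).card : ℝ) = (k : ℝ) - 1 := by
    rw [Finset.card_erase_of_mem (Finset.mem_univ i), Finset.card_univ, Fintype.card_fin,
      Nat.cast_sub hk, Nat.cast_one]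
  calc 2 * p i * (1 - p i) = ∑ j ∈ Finset.univ.erase i, 2 * p i * p j := by
        rw [← hrest, Finset.mul_sum]
    _ ≤ (Finset.univ.erase i).card • simplexMax hk p :=
        Finset.sum_le_card_nsmul _ _ _ fun j hj =>
          two_mul_mul_le hk p (Finset.ne_of_mem_erase hj).symm
    _ = ((k : ℝ) - 1) * simplexMax hk p := by rw [nsmul_eq_mul, hcard]

lemma two_div_sq_le (hk3 : 3 ≤ k) (hs : ∑ i, p i = 1) : 2 / (k : ℝ) ^ 2 ≤ simplexMax hk p := by
  obtain ⟨i, -, hi⟩ : ∃ i ∈ Finset.univ, 1 / (k : ℝ) ≤ p i := by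
    refine Finset.exists_le_of_sum_le ⟨⟨0, hk⟩, Finset.mem_univ _⟩ ?_
    simp [hs, hk.ne']
  exact two_div_sq_le_of_sq_le_of_two_mul_mul_one_sub_le (by exact_mod_cast hk3) hi
    (sq_le hk p i) (two_mul_mul_one_sub_le hk p hs i)

lemma const_eq (hk2 : 2 ≤ k) (c : ℝ) : simplexMax hk (fun _ => c) = 2 * c ^ 2 := by
  refine le_antisymm (le_of_entry_le hk _ fun ij => ?_) ?_
  · split_ifs <;> nlinarith [sq_nonneg c]
  · simpa [sq, mul_assoc] using
      two_mul_mul_le hk (fun _ => c) (i := ⟨0, hk⟩) (j := ⟨1, hk2⟩) (by simp [Fin.ext_iff])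

end simplexMax

/-- For `k ≥ 3`: every probability vector `p` on `Fin k` (entries in `[0,1]`
summing to `1`) satisfies `M(p) ≥ 2/k²`; the uniform vector `p i = 1/k` attains
`M(p) = 2/k²`; hence the minimum of `M(p)` over the probability simplex equals `2/k²`. -/
theorem simplexMax_min_eq_two_div_sq (k : ℕ) (hk : 3 ≤ k) :
    (∀ p : Fin k → ℝ, (∀ i, p i ∈ Set.Icc (0 : ℝ) 1) → (∑ i, p i) = 1 →
        2 / (k : ℝ) ^ 2 ≤ simplexMax (by omega) p) ∧
    simplexMax (show 0 < k by omega) (fun _ => 1 / (k : ℝ)) = 2 / (k : ℝ) ^ 2 ∧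
    IsLeast {x : ℝ | ∃ p : Fin k → ℝ, (∀ i, p i ∈ Set.Icc (0 : ℝ) 1) ∧
        (∑ i, p i) = 1 ∧ simplexMax (show 0 < k by omega) p = x} (2 / (k : ℝ) ^ 2) := by
  have hk0 : (0 : ℝ) < k := by exact_mod_cast (show 0 < k by omega)
  have lower : ∀ p : Fin k → ℝ, (∑ i, p i) = 1 → 2 / (k : ℝ) ^ 2 ≤ simplexMax (by omega) p :=
    fun p hs => simplexMax.two_div_sq_le _ p hk hs
  have uniform : simplexMax (show 0 < k by omega) (fun _ => 1 / (k : ℝ)) = 2 / (k : ℝ) ^ 2 := by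
    rw [simplexMax.const_eq _ (by omega)]
    ring
  have uniform_mem : ∀ i : Fin k, (fun _ => 1 / (k : ℝ)) i ∈ Set.Icc (0 : ℝ) 1 :=
    fun _ => ⟨by positivity, by rw [div_le_one hk0]; exact_mod_cast (show 1 ≤ k by omega)⟩
  have uniform_sum : ∑ _i : Fin k, 1 / (k : ℝ) = 1 := by simp [hk0.ne']
  refine ⟨fun p _ hs => lower p hs, uniform, ⟨_, uniform_mem, uniform_sum, uniform⟩, ?_⟩
  rintro _ ⟨p, -, hs, rfl⟩
  exact lower p hs
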